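/- Let P be a nonempty finite poset, K a ring, and f a K-labeling with R²f ≠ ⊥. Then both f(0) and f(1) are invertible in K. -/

import Mathlib

/-!
The last element `v` of a linear extension is maximal, so `v ⋖ 1`, and the very first toggle
`T_v` of rowmotion needs `f(1)` to be invertible. The first element `w` is minimal, so its only
lower cover is `0`: the first pass of rowmotion replaces the label at `w` by `f(0)` times two
units, and nothing changes it until the second pass toggles `w` again, which needs this label,
hence `f(0)`, to be invertible.
-/

open scoped Classical


instance {α : Type*} [Fintype α] : Fintype (WithTop α) :=
  inferInstanceAs (Fintype (Option α))

instance {α : Type*} [Fintype α] : Fintype (WithBot α) :=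
  inferInstanceAs (Fintype (Option α))

/-- The poset `P` with an adjoined global minimum `⊥` (called `0` in the paper) and an
adjoined global maximum `⊤` (called `1` in the paper). -/
abbrev PHat (P : Type*) := WithBot (WithTop P)

/-- The embedding of `P` into `PHat P`. -/
def toPHat {P : Type*} (v : P) : PHat P := ((v : WithTop P) : WithBot (WithTop P))

/-- The birational toggle `T_v` at an element `v ∈ P`, as a partial map (modelled via
`Option`) on `K`-labelings `f : PHat P → K`.  It replaces the label at `v` by
`(∑_{u ⋖ v} f u) * (f v)⁻¹ * (∑_{u ⋗ v} (f u)⁻¹)⁻¹` and leaves all other labels unchanged;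
it is undefined (`none`) whenever any of the required inverses fails to exist. -/
noncomputable def toggle {P : Type*} [PartialOrder P] [Fintype P] {K : Type*} [Ring K]
    (v : P) (f : PHat P → K) : Option (PHat P → K) :=
  if IsUnit (f (toPHat v)) ∧ (∀ u : PHat P, toPHat v ⋖ u → IsUnit (f u)) ∧
      IsUnit (∑ u ∈ Finset.univ.filter (fun u : PHat P => toPHat v ⋖ u), Ring.inverse (f u))
  then some (Function.update f (toPHat v)
      ((∑ u ∈ Finset.univ.filter (fun u : PHat P => u ⋖ toPHat v), f u) *
        Ring.inverse (f (toPHat v)) *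
        Ring.inverse
          (∑ u ∈ Finset.univ.filter (fun u : PHat P => toPHat v ⋖ u), Ring.inverse (f u))))
  else none

/-- `toggleList [v₁, …, vₘ] = T_{v₁} ∘ T_{v₂} ∘ ⋯ ∘ T_{vₘ}` as a partial map
(`T_{vₘ}` is applied first); `⊥ = none` propagates through the composition. -/
noncomputable def toggleList {P : Type*} [PartialOrder P] [Fintype P] {K : Type*} [Ring K] :
    List P → (PHat P → K) → Option (PHat P → K)
  | [], f => some f
  | v :: L, f => (toggleList L f).bind (toggle v)

/-- `rowIter L n` is the `n`-fold iteration `R^n` of birational rowmotion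
`R = toggleList L` (for `L` a linear extension of `P`), as a partial map. -/
noncomputable def rowIter {P : Type*} [PartialOrder P] [Fintype P] {K : Type*} [Ring K]
    (L : List P) : ℕ → (PHat P → K) → Option (PHat P → K)
  | 0, f => some f
  | n + 1, f => (toggleList L f).bind (rowIter L n)

/-- A linear extension of a poset `P`: a list of all elements of `P`, each occurring exactly
once, such that `vᵢ < vⱼ` in `P` implies `i < j`. -/
def IsLinearExtension {P : Type*} [PartialOrder P] (L : List P) : Prop :=
  L.Nodup ∧ (∀ v : P, v ∈ L) ∧ L.Pairwise fun a b => ¬ b < a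

lemma toPHat_injective {P : Type*} : Function.Injective (toPHat (P := P)) :=
  WithBot.coe_injective.comp WithTop.coe_injective

lemma toPHat_ne_bot {P : Type*} (v : P) : toPHat v ≠ ⊥ := WithBot.coe_ne_bot

section Covers

variable {P : Type*} [PartialOrder P]

lemma toPHat_covBy_top {v : P} (hv : IsMax v) : toPHat v ⋖ (⊤ : PHat P) :=
  WithBot.coe_covBy_coe.mpr (WithTop.coe_covBy_top.mpr hv)

lemma covBy_toPHat_iff {v : P} (hv : IsMin v) {u : PHat P} : u ⋖ toPHat v ↔ u = ⊥ := by
  refine ⟨fun hu => ?_, fun hu => hu ▸ WithBot.bot_covBy_coe.mpr hv.withTop⟩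
  induction u using WithBot.recBotCoe with
  | bot => rfl
  | coe c =>
    induction c using WithTop.recTopCoe with
    | top => exact absurd (WithBot.coe_lt_coe.mp hu.lt) (not_lt_of_ge le_top)
    | coe w => exact absurd (WithTop.coe_lt_coe.mp (WithBot.coe_lt_coe.mp hu.lt)) hv.not_lt

lemma IsLinearExtension.isMin_of_cons {v : P} {L : List P} (hL : IsLinearExtension (v :: L)) :
    IsMin v := by
  refine isMin_iff_forall_not_lt.mpr fun w hw => ?_
  rcases List.mem_cons.mp (hL.2.1 w) with rfl | hwL
  · exact lt_irrefl w hw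
  · exact (List.pairwise_cons.mp hL.2.2).1 w hwL hw

lemma IsLinearExtension.isMax_of_append_singleton {v : P} {L : List P}
    (hL : IsLinearExtension (L ++ [v])) : IsMax v := by
  refine isMax_iff_forall_not_lt.mpr fun w hw => ?_
  rcases List.mem_append.mp (hL.2.1 w) with hwL | hwv
  · exact (List.pairwise_append.mp hL.2.2).2.2 w hwL v (List.mem_singleton_self v) hw
  · exact lt_irrefl v (List.eq_of_mem_singleton hwv ▸ hw)

end Covers

section Toggles

variable {P : Type*} [PartialOrder P] [Fintype P] {K : Type*} [Ring K]

lemma toggle_eq_some_iff {v : P} {f g : PHat P → K} :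
    toggle v f = some g ↔
      (IsUnit (f (toPHat v)) ∧ (∀ u : PHat P, toPHat v ⋖ u → IsUnit (f u)) ∧
        IsUnit (∑ u ∈ Finset.univ.filter (fun u : PHat P => toPHat v ⋖ u), Ring.inverse (f u))) ∧
      Function.update f (toPHat v)
        ((∑ u ∈ Finset.univ.filter (fun u : PHat P => u ⋖ toPHat v), f u) *
          Ring.inverse (f (toPHat v)) *
          Ring.inverse
            (∑ u ∈ Finset.univ.filter (fun u : PHat P => toPHat v ⋖ u), Ring.inverse (f u))) =
        g := by
  rw [toggle]
  split_ifs with hc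
  · exact Option.some_inj.trans (and_iff_right hc).symm
  · simp only [hc, false_and]

lemma toggle_apply_of_ne {v : P} {f g : PHat P → K} (h : toggle v f = some g) {x : PHat P}
    (hx : x ≠ toPHat v) : g x = f x := by
  rw [← (toggle_eq_some_iff.mp h).2, Function.update_of_ne hx]

lemma isUnit_toggle_apply_iff_of_isMin {v : P} (hv : IsMin v) {f g : PHat P → K}
    (h : toggle v f = some g) : IsUnit (g (toPHat v)) ↔ IsUnit (f ⊥) := by
  obtain ⟨⟨hfv, -, hsum⟩, rfl⟩ := toggle_eq_some_iff.mp h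
  have hlower : Finset.univ.filter (fun u : PHat P => u ⋖ toPHat v) = {⊥} := by
    ext u
    simp [covBy_toPHat_iff hv]
  rw [Function.update_self, hlower, Finset.sum_singleton,
    IsUnit.mul_right_iff (isUnit_ringInverse.mpr hsum),
    IsUnit.mul_right_iff (isUnit_ringInverse.mpr hfv)]

lemma toggleList_apply_of_forall_ne {L : List P} {f g : PHat P → K}
    (h : toggleList L f = some g) {x : PHat P} (hx : ∀ v ∈ L, toPHat v ≠ x) : g x = f x := by
  induction L generalizing g with
  | nil => rw [Option.some_inj.mp h]
  | cons v L ih =>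
    obtain ⟨f', hf', hg⟩ := Option.bind_eq_some_iff.mp h
    rw [toggle_apply_of_ne hg fun hxv => hx v List.mem_cons_self hxv.symm,
      ih hf' fun w hw => hx w (List.mem_cons_of_mem v hw)]

lemma toggleList_append (L₁ L₂ : List P) (f : PHat P → K) :
    toggleList (L₁ ++ L₂) f = (toggleList L₂ f).bind (toggleList L₁) := by
  induction L₁ with
  | nil => simp [toggleList]
  | cons v L₁ ih => simp [toggleList, ih, Option.bind_assoc]

lemma rowIter_two (L : List P) (f : PHat P → K) :
    rowIter L 2 f = (toggleList L f).bind (toggleList L) := by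
  simp [rowIter]

lemma isUnit_top_of_toggleList_append_singleton {L : List P} {v : P} (hv : IsMax v)
    {f g : PHat P → K} (h : toggleList (L ++ [v]) f = some g) : IsUnit (f ⊤) := by
  rw [toggleList_append] at h
  obtain ⟨f', hf', -⟩ := Option.bind_eq_some_iff.mp h
  exact (toggle_eq_some_iff.mp hf').1.2.1 ⊤ (toPHat_covBy_top hv)

lemma isUnit_bot_of_toggleList_cons_twice {L : List P} {v : P} (hv : IsMin v) (hvL : v ∉ L)
    {f g k : PHat P → K} (hfg : toggleList (v :: L) f = some g)
    (hgk : toggleList (v :: L) g = some k) : IsUnit (f ⊥) := by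
  obtain ⟨f', hff', hf'g⟩ := Option.bind_eq_some_iff.mp hfg
  obtain ⟨g', hgg', hg'k⟩ := Option.bind_eq_some_iff.mp hgk
  have hg' : g' (toPHat v) = g (toPHat v) :=
    toggleList_apply_of_forall_ne hgg' fun w hw hwv => hvL (toPHat_injective hwv ▸ hw)
  have hf' : f' ⊥ = f ⊥ := toggleList_apply_of_forall_ne hff' fun w _ => toPHat_ne_bot w
  rw [← hf', ← isUnit_toggle_apply_iff_of_isMin hv hf'g, ← hg']
  exact (toggle_eq_some_iff.mp hg'k).1.1

end Toggles

/-- If `P ≠ ∅` and `R² f ≠ ⊥`, then `f(0)` and `f(1)` are invertible. -/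
theorem stmt14 {P : Type*} [PartialOrder P] [Fintype P] [Nonempty P] {K : Type*} [Ring K]
    (L : List P) (hL : IsLinearExtension L) (f g : PHat P → K)
    (hfg : rowIter L 2 f = some g) :
    IsUnit (f ⊥) ∧ IsUnit (f ⊤) := by
  rw [rowIter_two] at hfg
  obtain ⟨h, hfh, hhg⟩ := Option.bind_eq_some_iff.mp hfg
  have hL_ne_nil : L ≠ [] := List.ne_nil_of_mem (hL.2.1 (Classical.arbitrary P))
  constructor
  · obtain ⟨v, L', rfl⟩ := List.exists_cons_of_ne_nil hL_ne_nil
    exact isUnit_bot_of_toggleList_cons_twice hL.isMin_of_cons (List.nodup_cons.mp hL.1).1 hfh hhg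
  · obtain ⟨L', v, rfl⟩ := (List.eq_nil_or_concat' L).resolve_left hL_ne_nil
    exact isUnit_top_of_toggleList_append_singleton hL.isMax_of_append_singleton hfh
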